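/- The map ∂_n = Σ_{i=1}^n (−1)^i s^{i,n−1} : K[Σ_n] → K[Σ_{n−1}] is a boundary operator, i.e. ∂_{n−1} ∘ ∂_n = 0 for all n ≥ 2. -/
import Mathlib


/-- A word `w` (in one-line notation) is a permutation of `{1, …, w.length}`. -/
def IsPermWord (w : List ℕ) : Prop := w.Perm (List.range' 1 w.length)

/-- Standardization of a word. -/
def stw (X : List ℕ) : List ℕ :=
  (List.range X.length).map (fun i =>
    (((List.range X.length).filter (fun j =>
      X.getD j 0 < X.getD i 0 ∨ (X.getD j 0 = X.getD i 0 ∧ j < i))).length) + 1)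

/-- Codegeneracy `s^{i,n-1}`: delete the `i`-th letter (1-based) and standardize. -/
def codegw (σ : List ℕ) (i : ℕ) : List ℕ := stw (σ.eraseIdx (i - 1))

/-- The boundary `∂_n(w) = Σ_{i=1}^n (-1)^i s^{i,n-1}(w)` of a basis word `w`,
as an element of the free `K`-vector space on words. -/
noncomputable def bdF (K : Type*) [Field K] (w : List ℕ) : List ℕ →₀ K :=
  ∑ i ∈ Finset.range w.length, ((-1 : K) ^ (i + 1)) • Finsupp.single (codegw w (i + 1)) 1

/-- The linear extension of `bdF` to the free `K`-vector space on words. -/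
noncomputable def bdL (K : Type*) [Field K] : (List ℕ →₀ K) →ₗ[K] (List ℕ →₀ K) :=
  Finsupp.lsum K fun w => (LinearMap.id : K →ₗ[K] K).smulRight (bdF K w)

namespace BSZaux

/-- The strict total order on positions used by standardization. -/
def lt' (X : List ℕ) (j i : ℕ) : Prop :=
  X.getD j 0 < X.getD i 0 ∨ (X.getD j 0 = X.getD i 0 ∧ j < i)

instance (X : List ℕ) (j i : ℕ) : Decidable (lt' X j i) := by
  unfold lt'; infer_instance

lemma lt'_irrefl (X : List ℕ) (i : ℕ) : ¬ lt' X i i := by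
  simp [lt']

lemma lt'_trans {X : List ℕ} {a b c : ℕ} (h1 : lt' X a b) (h2 : lt' X b c) : lt' X a c := by
  unfold lt' at *; omega

lemma lt'_trichotomy (X : List ℕ) {i j : ℕ} (h : i ≠ j) : lt' X i j ∨ lt' X j i := by
  unfold lt'; omega

/-- Rank of position `i` of `X`. -/
def rank (X : List ℕ) (i : ℕ) : ℕ :=
  ((Finset.range X.length).filter (fun j => lt' X j i)).card

lemma stw_eq_map_rank (X : List ℕ) :
    stw X = (List.range X.length).map (fun i => rank X i + 1) := by
  unfold stw rank
  apply List.map_congr_left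
  intro i _
  rfl

lemma rank_lt_rank {X : List ℕ} {i i' : ℕ} (hi : i < X.length) (hi' : i' < X.length)
    (h : lt' X i' i) : rank X i' < rank X i := by
  apply Finset.card_lt_card
  constructor
  · intro j hj
    simp only [Finset.mem_filter, Finset.mem_range] at *
    exact ⟨hj.1, lt'_trans hj.2 h⟩
  · intro hsub
    have : i' ∈ (Finset.range X.length).filter (fun j => lt' X j i) := by
      simp only [Finset.mem_filter, Finset.mem_range]; exact ⟨hi', h⟩
    have := hsub this
    simp only [Finset.mem_filter] at this
    exact lt'_irrefl X i' this.2

lemma rank_lt_rank_iff {X : List ℕ} {i i' : ℕ} (hi : i < X.length) (hi' : i' < X.length) :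
    rank X i' < rank X i ↔ lt' X i' i := by
  refine ⟨fun h => ?_, rank_lt_rank hi hi'⟩
  by_contra hn
  rcases eq_or_ne i' i with rfl | hne
  · omega
  rcases lt'_trichotomy X hne with h1 | h1
  · exact hn h1
  · have := rank_lt_rank hi' hi h1; omega

lemma rank_inj {X : List ℕ} {i i' : ℕ} (hi : i < X.length) (hi' : i' < X.length)
    (h : rank X i' = rank X i) : i' = i := by
  by_contra hne
  rcases lt'_trichotomy X hne with h1 | h1
  · have := rank_lt_rank hi hi' h1; omega
  · have := rank_lt_rank hi' hi h1; omega

lemma stw_length (X : List ℕ) : (stw X).length = X.length := by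
  simp [stw]

lemma stw_getD {X : List ℕ} {i : ℕ} (hi : i < X.length) :
    (stw X).getD i 0 = rank X i + 1 := by
  rw [stw_eq_map_rank]
  rw [List.getD_eq_getElem _ _ (by simpa using hi)]
  simp

lemma lt'_stw {X : List ℕ} {i j : ℕ} (hi : i < X.length) (hj : j < X.length) :
    lt' (stw X) j i ↔ lt' X j i := by
  unfold lt'
  rw [stw_getD hi, stw_getD hj]
  constructor
  · rintro (h | ⟨h, hji⟩)
    · exact (rank_lt_rank_iff hi hj).mp (by omega)
    · have := rank_inj hi hj (by omega); omega
  · intro h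
    rcases eq_or_ne j i with rfl | hne
    · exact absurd h (lt'_irrefl X j)
    · left; have := rank_lt_rank hi hj h; omega

lemma stw_congr {X Y : List ℕ} (hlen : X.length = Y.length)
    (h : ∀ i < X.length, ∀ j < X.length, (lt' X j i ↔ lt' Y j i)) : stw X = stw Y := by
  rw [stw_eq_map_rank, stw_eq_map_rank, ← hlen]
  apply List.map_congr_left
  intro i hi
  rw [List.mem_range] at hi
  congr 1
  unfold rank
  rw [← hlen]
  congr 1
  apply Finset.filter_congr
  intro j hj
  rw [Finset.mem_range] at hj
  exact h i hi j hj

lemma getD_eraseIdx {X : List ℕ} {k i : ℕ} (hk : k < X.length) (hi : i < X.length - 1) :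
    (X.eraseIdx k).getD i 0 = X.getD (if i < k then i else i + 1) 0 := by
  have hlen : (X.eraseIdx k).length = X.length - 1 := by
    rw [List.length_eraseIdx]; simp [hk]
  rw [List.getD_eq_getElem _ _ (by omega)]
  rw [List.getElem_eraseIdx]
  split_ifs with h1
  · rw [List.getD_eq_getElem _ _ (by omega)]
  · rw [List.getD_eq_getElem _ _ (by omega)]

lemma lt'_eraseIdx {X : List ℕ} {k i j : ℕ} (hk : k < X.length)
    (hi : i < X.length - 1) (hj : j < X.length - 1) :
    lt' (X.eraseIdx k) j i ↔
      lt' X (if j < k then j else j + 1) (if i < k then i else i + 1) := by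
  unfold lt'
  rw [getD_eraseIdx hk hi, getD_eraseIdx hk hj]
  have : (j < i) ↔ ((if j < k then j else j + 1) < (if i < k then i else i + 1)) := by
    split_ifs <;> omega
  rw [this]

lemma stw_eraseIdx_stw (X : List ℕ) {k : ℕ} (hk : k < X.length) :
    stw ((stw X).eraseIdx k) = stw (X.eraseIdx k) := by
  have hsl := stw_length X
  have hlen : ((stw X).eraseIdx k).length = (X.eraseIdx k).length := by
    rw [List.length_eraseIdx, List.length_eraseIdx, hsl]
  have hel : ((stw X).eraseIdx k).length = X.length - 1 := by
    rw [List.length_eraseIdx]; simp [hsl, hk]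
  apply stw_congr hlen
  intro i hi j hj
  rw [hel] at hi hj
  rw [lt'_eraseIdx (by omega) (by omega) (by omega),
      lt'_eraseIdx hk (by omega) (by omega)]
  apply lt'_stw <;> split_ifs <;> omega

lemma getElem_congr' (l : List ℕ) {a b : ℕ} (h : a = b) (ha : a < l.length) :
    l[a]'ha = l[b]'(h ▸ ha) := by subst h; rfl

lemma eraseIdx_swap (l : List ℕ) {a b : ℕ} (hab : a ≤ b) (hb : b + 1 < l.length) :
    (l.eraseIdx a).eraseIdx b = (l.eraseIdx (b + 1)).eraseIdx a := by
  have h1 : (l.eraseIdx a).length = l.length - 1 := by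
    rw [List.length_eraseIdx]; simp [show a < l.length by omega]
  have h2 : ((l.eraseIdx a).eraseIdx b).length = l.length - 2 := by
    rw [List.length_eraseIdx]; rw [h1]; simp [show b < l.length - 1 by omega]; omega
  have h3 : (l.eraseIdx (b+1)).length = l.length - 1 := by
    rw [List.length_eraseIdx]; simp [hb]
  have h4 : ((l.eraseIdx (b+1)).eraseIdx a).length = l.length - 2 := by
    rw [List.length_eraseIdx]; rw [h3]; simp [show a < l.length - 1 by omega]; omega
  apply List.ext_getElem (by omega)
  intro i hi hi'
  rw [List.getElem_eraseIdx, List.getElem_eraseIdx]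
  rw [h2] at hi
  simp only [List.getElem_eraseIdx]
  by_cases c1 : i < a <;> by_cases c2 : i < b
  · simp [c1, c2, show i < b + 1 by omega]
  · omega
  · simp [c1, c2, show i + 1 < b + 1 by omega]
  · simp [c1, c2, show ¬ (i + 1 < a) by omega, show ¬ (i + 1 < b + 1) by omega]

end BSZaux

open BSZaux in
/-- `∂_{n-1} ∘ ∂_n = 0` on `K[Σ_n]` for `n ≥ 2` (checked on basis
elements, i.e. permutation words of length `≥ 2`). -/
theorem boundary_squared_zero (K : Type*) [Field K] (w : List ℕ)
    (hw : IsPermWord w) (h2 : 2 ≤ w.length) :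
    bdL K (bdF K w) = 0 := by
  set n := w.length with hn
  have hcodeg : ∀ i < n, codegw w (i + 1) = stw (w.eraseIdx i) := by
    intro i _; simp [codegw]
  have hclen : ∀ i < n, (codegw w (i + 1)).length = n - 1 := by
    intro i hi
    rw [hcodeg i hi, stw_length, List.length_eraseIdx]
    simp [← hn, hi]
  -- step 1: expand
  have step1 : bdL K (bdF K w) =
      ∑ i ∈ Finset.range n, ((-1 : K) ^ (i + 1)) • bdF K (codegw w (i + 1)) := by
    rw [bdF, map_sum]
    apply Finset.sum_congr rfl
    intro i _
    rw [map_smul]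
    congr 1
    simp [bdL, Finsupp.lsum_apply, Finsupp.sum_single_index]
  rw [step1]
  have step2 : ∀ i ∈ Finset.range n, ((-1 : K) ^ (i + 1)) • bdF K (codegw w (i + 1)) =
      ∑ j ∈ Finset.range (n - 1),
        ((-1 : K) ^ (i + j)) • Finsupp.single (stw ((w.eraseIdx i).eraseIdx j)) (1 : K) := by
    intro i hi
    rw [Finset.mem_range] at hi
    rw [bdF, hclen i hi, Finset.smul_sum]
    apply Finset.sum_congr rfl
    intro j hj
    rw [Finset.mem_range] at hj
    rw [smul_smul]
    have hword : codegw (codegw w (i + 1)) (j + 1) = stw ((w.eraseIdx i).eraseIdx j) := by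
      rw [hcodeg i hi]
      simp only [codegw, Nat.add_sub_cancel]
      apply stw_eraseIdx_stw
      rw [List.length_eraseIdx]
      simp [← hn, hi]; omega
    rw [hword]
    congr 1
    rw [← pow_add]
    have : i + 1 + (j + 1) = (i + j) + 2 := by ring
    rw [this, pow_add]
    simp
  rw [Finset.sum_congr rfl step2, ← Finset.sum_product']
  set f : ℕ × ℕ → (List ℕ →₀ K) := fun p =>
    ((-1 : K) ^ (p.1 + p.2)) • Finsupp.single (stw ((w.eraseIdx p.1).eraseIdx p.2)) (1 : K)
    with hf
  apply Finset.sum_involution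
    (g := fun p _ => if p.1 ≤ p.2 then (p.2 + 1, p.1) else (p.2, p.1 - 1))
  · rintro ⟨i, j⟩ hp
    simp only [Finset.mem_product, Finset.mem_range] at hp
    obtain ⟨hi, hj⟩ := hp
    by_cases hc : i ≤ j
    · simp only [hc, if_pos]
      have hswap : (w.eraseIdx (j+1)).eraseIdx i = (w.eraseIdx i).eraseIdx j :=
        (eraseIdx_swap w hc (by omega)).symm
      rw [hswap]
      have : j + 1 + i = (i + j) + 1 := by ring
      rw [this, pow_succ]
      rw [← add_smul]
      simp
    · simp only [hc, if_neg, if_false]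
      have hc' : j ≤ i - 1 := by omega
      have hswap : (w.eraseIdx j).eraseIdx (i-1) = (w.eraseIdx i).eraseIdx j := by
        rw [eraseIdx_swap w hc' (by omega)]
        congr 2
        omega
      rw [hswap]
      have : i + j = (j + (i - 1)) + 1 := by omega
      rw [this, pow_succ]
      rw [← add_smul]
      simp [mul_comm]
  · rintro ⟨i, j⟩ _ _
    by_cases hc : i ≤ j
    · rw [if_pos hc]
      intro hEq
      rw [Prod.mk.injEq] at hEq
      omega
    · rw [if_neg hc]
      intro hEq
      rw [Prod.mk.injEq] at hEq
      omega
  · rintro ⟨i, j⟩ hp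
    simp only [Finset.mem_product, Finset.mem_range] at hp
    obtain ⟨hi, hj⟩ := hp
    by_cases hc : i ≤ j
    · simp only [if_pos hc]
      rw [if_neg (show ¬ (j + 1 ≤ i) by omega)]
      simp
    · simp only [if_neg hc]
      rw [if_pos (show j ≤ i - 1 by omega)]
      have : i - 1 + 1 = i := by omega
      rw [this]
  · rintro ⟨i, j⟩ hp
    simp only [Finset.mem_product, Finset.mem_range] at hp
    obtain ⟨hi, hj⟩ := hp
    by_cases hc : i ≤ j
    · rw [if_pos hc]
      simp only [Finset.mem_product, Finset.mem_range]
      constructor <;> omega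
    · rw [if_neg hc]
      simp only [Finset.mem_product, Finset.mem_range]
      constructor <;> omega
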